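/- arXiv:1704.04254 — 4 statements merged into one kernel-verified Lean document; each statement's English description precedes it below -/
import Mathlib

section
/- Let γ, β ∈ (0,1), 0 < d < π/4, λ₁ > 0 and 0 < b < λ₁/√2. Assume there is a constant C₀ > 0 such that |e_{γ,1}(w)| ≤ C₀/(1+|w|) for every w ∈ ℂ with Re w ≤ 0. Then there exists a constant C > 0, depending only on γ, β, d, b, λ₁ and C₀, such that for every t > 0, every real λ ≥ λ₁ and every y ∈ ℂ with |Im y| ≤ d one has |g_λ(y,t)| ≤ C · t^{−γ} · e^{−β|Re y|}. -/
/-- Two-parameter Mittag-Leffler function `e_{γ,μ}(z) = ∑ₖ zᵏ / Γ(kγ+μ)`,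
with the reciprocal Gamma interpreted as `0` at non-positive integers. -/
noncomputable def mlf (γ μ : ℝ) (z : ℂ) : ℂ :=
  ∑' k : ℕ, (Complex.Gamma (((k : ℝ) * γ + μ : ℝ) : ℂ))⁻¹ * z ^ k

/-- Hyperbolic contour `z(y) = b (cosh y + i sinh y)`. -/
noncomputable def zc (b : ℝ) (y : ℂ) : ℂ :=
  (b : ℂ) * (Complex.cosh y + Complex.I * Complex.sinh y)

/-- Derivative of the hyperbolic contour, `z'(y) = b (sinh y + i cosh y)`. -/
noncomputable def zcDeriv (b : ℝ) (y : ℂ) : ℂ :=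
  (b : ℂ) * (Complex.sinh y + Complex.I * Complex.cosh y)


/-- The function `g_λ(y,t) = e_{γ,1}(-t^γ z(y)^β) · z'(y) · (z(y) - λ)⁻¹`. -/
noncomputable def gfun (γ β b t lam : ℝ) (y : ℂ) : ℂ :=
  mlf γ 1 (-(((t ^ γ : ℝ) : ℂ) * zc b y ^ (β : ℂ))) * zcDeriv b y * (zc b y - (lam : ℂ))⁻¹

/-!
The contour is a rotated and rescaled `cosh`: `z(y) = √2 b cosh (y + iπ/4)` and
`z'(y) = √2 b sinh (y + iπ/4)`. For `|Im y| ≤ d < π/4` the angle `Im y + π/4` stays in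
`[π/4 - d, π/4 + d] ⊂ (0, π/2)`, where `cos` and `sin` are bounded below by `m = cos (π/4 + d) > 0`.
Hence `Re z ≥ √2 b m cosh (Re y) ≳ e^{|Re y|}` and `|z'| ≤ √2 b e^{|Re y|}`. Moreover
`Re z ≤ √2 b cosh (Re y)` with `√2 b < λ₁`, while `|Im z| ≥ √2 b m |sinh (Re y)|`, so that
`|z - λ| ≳ e^{|Re y|}` uniformly in `λ ≥ λ₁`. Finally `Re z > 0` and `β ≤ 1` give `Re z^β ≥ 0`,
so the decay hypothesis yields `|e_{γ,1}(-t^γ z^β)| ≤ C₀ t^{-γ} |z|^{-β} ≲ t^{-γ} e^{-β |Re y|}`,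
and the growth of `z'` is cancelled by that of `z - λ`.
-/

open scoped Real

namespace Real

lemma cos_le_cos_of_abs_le {x r : ℝ} (h : |x| ≤ r) (hr : r ≤ π) : cos r ≤ cos x :=
  cos_abs x ▸ cos_le_cos_of_nonneg_of_le_pi (abs_nonneg x) hr h

lemma cosh_sub_abs_sinh (x : ℝ) : cosh x - |sinh x| = exp (-|x|) := by
  rw [← cosh_abs, abs_sinh, cosh_sub_sinh]

lemma exp_abs_eq_cosh_add_abs_sinh (x : ℝ) : exp |x| = cosh x + |sinh x| := by
  rw [← cosh_abs, abs_sinh, cosh_add_sinh]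

lemma exp_abs_le_two_mul_cosh (x : ℝ) : exp |x| ≤ 2 * cosh x := by
  rw [← cosh_abs, cosh_eq]
  linarith [exp_pos (-|x|)]

lemma cosh_le_exp_abs (x : ℝ) : cosh x ≤ exp |x| := by
  rw [exp_abs_eq_cosh_add_abs_sinh]
  linarith [abs_nonneg (sinh x)]

end Real

namespace Complex

lemma cosh_re (z : ℂ) : (cosh z).re = Real.cosh z.re * Real.cos z.im := by
  simp only [cosh, div_ofNat_re, add_re, exp_re, neg_re, neg_im, Real.cos_neg, Real.cosh_eq]
  ring

lemma cosh_im (z : ℂ) : (cosh z).im = Real.sinh z.re * Real.sin z.im := by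
  simp only [cosh, div_ofNat_im, add_im, exp_im, neg_re, neg_im, Real.sin_neg, mul_neg,
    Real.sinh_eq]
  ring

lemma norm_sinh_le_cosh_re (z : ℂ) : ‖sinh z‖ ≤ Real.cosh z.re :=
  calc ‖sinh z‖ = ‖exp z - exp (-z)‖ / 2 := by simp [sinh]
    _ ≤ (‖exp z‖ + ‖exp (-z)‖) / 2 := by gcongr; exact norm_sub_le _ _
    _ = Real.cosh z.re := by simp [norm_exp, Real.cosh_eq]

lemma re_cpow_nonneg {z : ℂ} {β : ℝ} (hz : 0 ≤ z.re) (hβ₀ : 0 ≤ β) (hβ₁ : β ≤ 1) :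
    0 ≤ (z ^ (β : ℂ)).re := by
  rw [cpow_ofReal_re]
  refine mul_nonneg (Real.rpow_nonneg (norm_nonneg z) β)
    (Real.cos_nonneg_of_mem_Icc (abs_le.mp ?_))
  rw [abs_mul, abs_of_nonneg hβ₀]
  calc |arg z| * β ≤ π / 2 * 1 := by gcongr; exact abs_arg_le_pi_div_two_iff.mpr hz
    _ = π / 2 := mul_one _

lemma cosh_add_pi_div_four_mul_I (y : ℂ) :
    cosh (y + (π / 4 : ℝ) * I) = (√2 / 2 : ℝ) * (cosh y + I * sinh y) := by
  rw [cosh_add, cosh_mul_I, sinh_mul_I, ← ofReal_cos, ← ofReal_sin, Real.cos_pi_div_four,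
    Real.sin_pi_div_four]
  ring

lemma sinh_add_pi_div_four_mul_I (y : ℂ) :
    sinh (y + (π / 4 : ℝ) * I) = (√2 / 2 : ℝ) * (sinh y + I * cosh y) := by
  rw [sinh_add, cosh_mul_I, sinh_mul_I, ← ofReal_cos, ← ofReal_sin, Real.cos_pi_div_four,
    Real.sin_pi_div_four]
  ring

end Complex

lemma norm_le_div_of_neg_mul_cpow {f : ℂ → ℂ} {C₀ β s : ℝ} {z : ℂ}
    (hf : ∀ w : ℂ, w.re ≤ 0 → ‖f w‖ ≤ C₀ / (1 + ‖w‖)) (hC₀ : 0 ≤ C₀) (hβ₀ : 0 ≤ β)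
    (hβ₁ : β ≤ 1) (hs : 0 < s) (hz : 0 < z.re) :
    ‖f (-((s : ℂ) * z ^ (β : ℂ)))‖ ≤ C₀ / (s * ‖z‖ ^ β) := by
  have hw : (-((s : ℂ) * z ^ (β : ℂ))).re ≤ 0 := by
    simpa [Complex.mul_re] using mul_nonneg hs.le (Complex.re_cpow_nonneg hz.le hβ₀ hβ₁)
  have hnorm : ‖-((s : ℂ) * z ^ (β : ℂ))‖ = s * ‖z‖ ^ β := by
    rw [norm_neg, norm_mul, Complex.norm_real, Real.norm_of_nonneg hs.le, Complex.norm_cpow_real]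
  have hz₀ : 0 < ‖z‖ := hz.trans_le (Complex.re_le_norm z)
  calc ‖f _‖ ≤ C₀ / (1 + ‖-((s : ℂ) * z ^ (β : ℂ))‖) := hf _ hw
    _ ≤ C₀ / (s * ‖z‖ ^ β) := by
      rw [hnorm]
      gcongr
      linarith

lemma mul_exp_abs_le_norm_sub {c m lam1 lam x : ℝ} {ζ : ℂ} (hc : 0 ≤ c) (hcl : c ≤ lam1)
    (hm : 0 ≤ m) (hlam : lam1 ≤ lam) (hre : ζ.re ≤ c * Real.cosh x)
    (him : c * m * |Real.sinh x| ≤ |ζ.im|) :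
    m * min (lam1 - c) (c / 2) * Real.exp |x| ≤ (2 + m) * ‖ζ - lam‖ := by
  set s := |Real.sinh x|
  have hs : 0 ≤ s := abs_nonneg _
  have hN_re : lam - ζ.re ≤ ‖ζ - lam‖ := by
    simpa using (neg_le_abs (ζ - lam).re).trans (Complex.abs_re_le_norm (ζ - lam))
  have hN_im : |ζ.im| ≤ ‖ζ - lam‖ := by
    simpa using Complex.abs_im_le_norm (ζ - lam)
  have hcosh : Real.cosh x ≤ 1 + s := by
    linarith [Real.cosh_sub_abs_sinh x, Real.exp_le_one_iff.mpr (neg_nonpos.mpr (abs_nonneg x))]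
  have hexp : Real.exp |x| ≤ 1 + 2 * s := by
    rw [Real.exp_abs_eq_cosh_add_abs_sinh]
    linarith
  -- `m` times the bound through the real part plus twice the one through the imaginary part
  have hweighted : m * (lam1 - c + c * s) ≤ (2 + m) * ‖ζ - lam‖ := by
    nlinarith [mul_le_mul_of_nonneg_left hcosh hc]
  have hμ : min (lam1 - c) (c / 2) * Real.exp |x| ≤ lam1 - c + c * s := by
    have h₀ : 0 ≤ min (lam1 - c) (c / 2) := le_min (by linarith) (by linarith)
    nlinarith [min_le_left (lam1 - c) (c / 2), min_le_right (lam1 - c) (c / 2)]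
  calc m * min (lam1 - c) (c / 2) * Real.exp |x| ≤ m * (lam1 - c + c * s) := by
        rw [mul_assoc]
        exact mul_le_mul_of_nonneg_left hμ hm
    _ ≤ (2 + m) * ‖ζ - lam‖ := hweighted

section Contour

open Complex

lemma zc_eq (b : ℝ) (y : ℂ) : zc b y = (√2 * b : ℝ) * cosh (y + (π / 4 : ℝ) * I) := by
  rw [cosh_add_pi_div_four_mul_I, zc, ← mul_assoc, ← ofReal_mul]
  congr 2
  linear_combination -b * Real.sq_sqrt (show (0 : ℝ) ≤ 2 by norm_num) / 2

lemma zcDeriv_eq (b : ℝ) (y : ℂ) :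
    zcDeriv b y = (√2 * b : ℝ) * sinh (y + (π / 4 : ℝ) * I) := by
  rw [sinh_add_pi_div_four_mul_I, zcDeriv, ← mul_assoc, ← ofReal_mul]
  congr 2
  linear_combination -b * Real.sq_sqrt (show (0 : ℝ) ≤ 2 by norm_num) / 2

lemma re_zc (b : ℝ) (y : ℂ) :
    (zc b y).re = √2 * b * Real.cosh y.re * Real.cos (y.im + π / 4) := by
  simp [zc_eq, cosh_re, mul_assoc]

lemma im_zc (b : ℝ) (y : ℂ) :
    (zc b y).im = √2 * b * Real.sinh y.re * Real.sin (y.im + π / 4) := by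
  simp [zc_eq, cosh_im, mul_assoc]

lemma norm_zcDeriv_le {b : ℝ} (hb : 0 ≤ b) (y : ℂ) : ‖zcDeriv b y‖ ≤ √2 * b * Real.exp |y.re| := by
  rw [zcDeriv_eq, norm_mul, norm_real, Real.norm_of_nonneg (by positivity)]
  gcongr
  exact (norm_sinh_le_cosh_re _).trans (by simpa using Real.cosh_le_exp_abs y.re)

lemma cos_pi_div_four_add_le_of_abs_le {v d : ℝ} (hv : |v| ≤ d) (hd : d ≤ 3 * π / 4) :
    Real.cos (π / 4 + d) ≤ Real.cos (v + π / 4) ∧ Real.cos (π / 4 + d) ≤ Real.sin (v + π / 4) := by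
  have hπ : |π / 4| = π / 4 := abs_of_pos (by positivity)
  refine ⟨Real.cos_le_cos_of_abs_le ?_ (by linarith), ?_⟩
  · exact (abs_add_le v (π / 4)).trans (by rw [hπ]; linarith)
  · rw [← Real.cos_pi_div_two_sub]
    refine Real.cos_le_cos_of_abs_le ?_ (by linarith)
    rw [show π / 2 - (v + π / 4) = π / 4 - v by ring]
    exact (abs_sub _ _).trans (by rw [hπ]; linarith)

theorem exists_bounds_zc {b d lam1 : ℝ} (hd : 0 ≤ d) (hd' : d < π / 4) (hb : 0 < b)
    (hbl : √2 * b < lam1) :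
    ∃ K κ : ℝ, 0 < K ∧ 0 < κ ∧ ∀ y : ℂ, |y.im| ≤ d →
      0 < (zc b y).re ∧ K * Real.exp |y.re| ≤ ‖zc b y‖ ∧
      ∀ lam : ℝ, lam1 ≤ lam → κ * Real.exp |y.re| ≤ ‖zc b y - lam‖ := by
  set c := √2 * b
  set m := Real.cos (π / 4 + d)
  have hc : 0 < c := by positivity
  have hm : 0 < m := Real.cos_pos_of_mem_Ioo ⟨by linarith [Real.pi_pos], by linarith⟩
  refine ⟨c * m / 2, m * min (lam1 - c) (c / 2) / (2 + m), by positivity,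
    div_pos (mul_pos hm (lt_min (by linarith) (by positivity))) (by linarith), fun y hy => ?_⟩
  obtain ⟨hcos, hsin⟩ := cos_pi_div_four_add_le_of_abs_le hy (by linarith)
  have hre : c * m * Real.cosh y.re ≤ (zc b y).re := by
    rw [re_zc, mul_right_comm]
    gcongr
  refine ⟨(by positivity : 0 < c * m * Real.cosh y.re).trans_le hre, ?_, fun lam hlam => ?_⟩
  · calc c * m / 2 * Real.exp |y.re| ≤ c * m / 2 * (2 * Real.cosh y.re) := by
          gcongr
          exact Real.exp_abs_le_two_mul_cosh y.re
      _ = c * m * Real.cosh y.re := by ring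
      _ ≤ ‖zc b y‖ := hre.trans (re_le_norm _)
  · rw [div_mul_eq_mul_div, div_le_iff₀ (by positivity), mul_comm _ (2 + m)]
    refine mul_exp_abs_le_norm_sub hc.le hbl.le hm.le hlam ?_ ?_
    · rw [re_zc]
      exact mul_le_of_le_one_right (by positivity) (Real.cos_le_one _)
    · rw [im_zc, abs_mul, abs_mul, abs_of_pos hc, abs_of_pos (hm.trans_le hsin), mul_right_comm]
      gcongr

end Contour

theorem stmt3_general (γ β d lam1 b C₀ : ℝ)
    (hβ : β ∈ Set.Ioo (0 : ℝ) 1) (hd : 0 < d) (hd' : d < Real.pi / 4)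
    (hb : 0 < b) (hb' : b < lam1 / Real.sqrt 2) (hC₀ : 0 < C₀)
    (hml : ∀ w : ℂ, w.re ≤ 0 → ‖mlf γ 1 w‖ ≤ C₀ / (1 + ‖w‖)) :
    ∃ C : ℝ, 0 < C ∧ ∀ t : ℝ, 0 < t → ∀ lam : ℝ, lam1 ≤ lam → ∀ y : ℂ, |y.im| ≤ d →
      ‖gfun γ β b t lam y‖ ≤ C * t ^ (-γ) * Real.exp (-β * |y.re|) := by
  obtain ⟨hβ₀, hβ₁⟩ := hβ
  obtain ⟨K, κ, hK, hκ, hzc⟩ := exists_bounds_zc hd.le hd' hb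
    (by rwa [lt_div_iff₀ (by positivity), mul_comm] at hb')
  refine ⟨C₀ * (√2 * b) / (K ^ β * κ), by positivity, fun t ht lam hlam y hy => ?_⟩
  obtain ⟨hre, hnorm, hsub⟩ := hzc y hy
  set E := Real.exp |y.re|
  have hE : 0 < E := Real.exp_pos _
  have hml' : ‖mlf γ 1 (-(((t ^ γ : ℝ) : ℂ) * zc b y ^ (β : ℂ)))‖ ≤ C₀ / (t ^ γ * (K * E) ^ β) :=
    (norm_le_div_of_neg_mul_cpow hml hC₀.le hβ₀.le hβ₁.le (by positivity) hre).trans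
      (by gcongr)
  calc ‖gfun γ β b t lam y‖
      = ‖mlf γ 1 (-(((t ^ γ : ℝ) : ℂ) * zc b y ^ (β : ℂ)))‖ * ‖zcDeriv b y‖ *
          ‖zc b y - lam‖⁻¹ := by simp [gfun]
    _ ≤ C₀ / (t ^ γ * (K * E) ^ β) * (√2 * b * E) * (κ * E)⁻¹ := by
      gcongr
      · exact norm_zcDeriv_le hb.le y
      · exact hsub lam hlam
    _ = C₀ * (√2 * b) / (K ^ β * κ) * t ^ (-γ) * Real.exp (-β * |y.re|) := by
      rw [Real.mul_rpow hK.le hE.le, ← Real.exp_mul, Real.rpow_neg ht.le, neg_mul, Real.exp_neg]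
      field_simp

/-- bound `|g_λ(y,t)| ≤ C t^{-γ} e^{-β|Re y|}` on the closed strip. -/
theorem stmt3 (γ β d lam1 b C₀ : ℝ) (hγ : γ ∈ Set.Ioo (0 : ℝ) 1)
    (hβ : β ∈ Set.Ioo (0 : ℝ) 1) (hd : 0 < d) (hd' : d < Real.pi / 4)
    (hlam1 : 0 < lam1) (hb : 0 < b) (hb' : b < lam1 / Real.sqrt 2) (hC₀ : 0 < C₀)
    (hml : ∀ w : ℂ, w.re ≤ 0 → ‖mlf γ 1 w‖ ≤ C₀ / (1 + ‖w‖)) :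
    ∃ C : ℝ, 0 < C ∧ ∀ t : ℝ, 0 < t → ∀ lam : ℝ, lam1 ≤ lam → ∀ y : ℂ, |y.im| ≤ d →
      ‖gfun γ β b t lam y‖ ≤ C * t ^ (-γ) * Real.exp (-β * |y.re|) :=
  stmt3_general γ β d lam1 b C₀ hβ hd hd' hb hb' hC₀ hml
end

section
/- Let γ, β ∈ (0,1), 0 < d < π/4, λ₁ > 0 and 0 < b < λ₁/√2. Then for every t > 0 and every real λ ≥ λ₁, the function y ↦ g_λ(y,t) is holomorphic (complex differentiable) on the open strip B_d = {y ∈ ℂ : |Im y| < d} and continuous on the closed strip {y ∈ ℂ : |Im y| ≤ d}. -/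
/-
The Mittag-Leffler series is entire: log-convexity of `Γ` gives `Γ(x) / Γ(x + γ) ≤ (x - 1)^(-γ)`,
so the ratio test yields an infinite radius of convergence. The contour is
`z(y) = √2 b cosh(y + iπ/4)`, so on the strip `|Im y| < π/4` it has positive real part, which makes
`z(y)^β` holomorphic there, and it is real only on `Re y = 0`, where `z(y) ≤ √2 b < λ`. Hence every
factor of `g_λ(·, t)` is holomorphic on a neighbourhood of the closed strip `|Im y| ≤ d < π/4`.
-/

open Filter Topology FormalMultilinearSeries Real

namespace Real

theorem rpow_mul_Gamma_le_Gamma_add {x a : ℝ} (hx : 1 < x) (ha : 0 < a) :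
    (x - 1) ^ a * Gamma x ≤ Gamma (x + a) := by
  have hlog : log (Gamma x) - log (Gamma (x - 1)) = log (x - 1) := by
    have hΓ : Gamma x = (x - 1) * Gamma (x - 1) := by
      simpa using Gamma_add_one (s := x - 1) (by linarith)
    rw [hΓ, log_mul (by linarith) (Gamma_pos_of_pos (by linarith)).ne']
    ring
  have hslope := convexOn_log_Gamma.slope_mono_adjacent (x := x - 1) (y := x) (z := x + a)
    (Set.mem_Ioi.mpr (by linarith)) (Set.mem_Ioi.mpr (by linarith)) (by linarith) (by linarith)
  simp only [Function.comp, sub_sub_cancel, div_one, add_sub_cancel_left, hlog,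
    le_div_iff₀ ha] at hslope
  rw [← log_le_log_iff (by have := Gamma_pos_of_pos (by linarith : 0 < x); positivity) (Gamma_pos_of_pos (by linarith)),
    log_mul (by positivity) (Gamma_pos_of_pos (by linarith)).ne', log_rpow (by linarith)]
  linarith

theorem tendsto_Gamma_div_Gamma_add_atTop {a : ℝ} (ha : 0 < a) :
    Tendsto (fun x => Gamma x / Gamma (x + a)) atTop (𝓝 0) := by
  have hbound : Tendsto (fun x : ℝ => (x - 1) ^ (-a)) atTop (𝓝 0) :=
    (tendsto_rpow_neg_atTop ha).comp (tendsto_atTop_add_const_right _ _ tendsto_id)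
  refine tendsto_of_tendsto_of_tendsto_of_le_of_le' tendsto_const_nhds hbound ?_ ?_
  · filter_upwards [eventually_gt_atTop 0] with x hx
    exact div_nonneg (Gamma_pos_of_pos hx).le (Gamma_pos_of_pos (by linarith)).le
  · filter_upwards [eventually_gt_atTop 1] with x hx
    rw [div_le_iff₀ (Gamma_pos_of_pos (by linarith)), rpow_neg (by linarith),
      inv_mul_eq_div, le_div_iff₀' (rpow_pos_of_pos (by linarith) _)]
    exact rpow_mul_Gamma_le_Gamma_add hx ha

end Real

noncomputable def mlfCoeff (γ μ : ℝ) (k : ℕ) : ℂ :=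
  (Complex.Gamma (((k : ℝ) * γ + μ : ℝ) : ℂ))⁻¹

theorem mlf_eq_ofScalarsSum (γ μ : ℝ) : mlf γ μ = ofScalarsSum (mlfCoeff γ μ) := by
  rw [ofScalarsSum_eq_tsum]
  rfl

theorem norm_mlfCoeff {γ μ : ℝ} {k : ℕ} (hk : 0 < (k : ℝ) * γ + μ) :
    ‖mlfCoeff γ μ k‖ = (Gamma ((k : ℝ) * γ + μ))⁻¹ := by
  rw [mlfCoeff, Complex.Gamma_ofReal, norm_inv, Complex.norm_real,
    Real.norm_of_nonneg (Gamma_pos_of_pos hk).le]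

theorem radius_ofScalars_mlfCoeff {γ : ℝ} (hγ : 0 < γ) (μ : ℝ) :
    (ofScalars ℂ (mlfCoeff γ μ)).radius = ⊤ := by
  have harg : Tendsto (fun k : ℕ => (k : ℝ) * γ + μ) atTop atTop :=
    tendsto_atTop_add_const_right _ _ (tendsto_natCast_atTop_atTop.atTop_mul_const hγ)
  have hpos : ∀ᶠ k : ℕ in atTop, 0 < (k : ℝ) * γ + μ := harg.eventually_gt_atTop 0
  refine ofScalars_radius_eq_top_of_tendsto ℂ _ ?_ ?_
  · filter_upwards [hpos] with k hk
    rw [← norm_ne_zero_iff, norm_mlfCoeff hk]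
    exact inv_ne_zero (Gamma_pos_of_pos hk).ne'
  · refine ((tendsto_Gamma_div_Gamma_add_atTop hγ).comp harg).congr' ?_
    filter_upwards [hpos] with k hk
    have hsucc : ((k.succ : ℕ) : ℝ) * γ + μ = (k : ℝ) * γ + μ + γ := by push_cast; ring
    rw [Function.comp_apply, norm_mlfCoeff hk, norm_mlfCoeff (by rw [hsucc]; linarith), hsucc,
      inv_div_inv]

theorem differentiable_mlf {γ : ℝ} (hγ : 0 < γ) (μ : ℝ) : Differentiable ℂ (mlf γ μ) := by
  have hp := (ofScalars ℂ (mlfCoeff γ μ)).hasFPowerSeriesOnBall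
    (by simp [radius_ofScalars_mlfCoeff hγ μ])
  rw [radius_ofScalars_mlfCoeff hγ μ] at hp
  rw [mlf_eq_ofScalarsSum, ← differentiableOn_univ, ← Metric.eball_top 0]
  exact hp.differentiableOn

theorem zc_re (b : ℝ) (y : ℂ) :
    (zc b y).re = √2 * b * cosh y.re * cos (y.im + π / 4) := by
  rw [cos_add, cos_pi_div_four, sin_pi_div_four, cosh_eq]
  simp only [zc, Complex.cosh, Complex.sinh, Complex.mul_re, Complex.ofReal_re, Complex.add_re,
    Complex.div_ofNat_re, Complex.exp_re, Complex.neg_re, Complex.neg_im, cos_neg, Complex.I_re,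
    Complex.sub_re, zero_mul, Complex.I_im, Complex.div_ofNat_im, Complex.sub_im, Complex.exp_im,
    sin_neg, mul_neg, sub_neg_eq_add, one_mul, zero_sub, Complex.ofReal_im, Complex.add_im,
    Complex.mul_im, zero_add, sub_zero]
  ring_nf
  rw [sq_sqrt zero_le_two]
  ring

theorem zc_im (b : ℝ) (y : ℂ) :
    (zc b y).im = √2 * b * sinh y.re * sin (y.im + π / 4) := by
  rw [sin_add, cos_pi_div_four, sin_pi_div_four, sinh_eq]
  simp only [zc, Complex.cosh, Complex.sinh, Complex.mul_im, Complex.ofReal_re, Complex.add_im,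
    Complex.div_ofNat_im, Complex.exp_im, Complex.neg_re, Complex.neg_im, sin_neg, mul_neg,
    Complex.I_re, Complex.sub_im, sub_neg_eq_add, zero_mul, Complex.I_im, Complex.div_ofNat_re,
    Complex.sub_re, Complex.exp_re, cos_neg, one_mul, zero_add, Complex.ofReal_im, Complex.add_re,
    Complex.mul_re, zero_sub, add_zero]
  ring_nf
  rw [sq_sqrt zero_le_two]
  ring

theorem zc_re_pos {b : ℝ} (hb : 0 < b) {y : ℂ} (hy : |y.im| < π / 4) : 0 < (zc b y).re := by
  obtain ⟨hlo, hhi⟩ := abs_lt.mp hy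
  have hcos : 0 < cos (y.im + π / 4) := cos_pos_of_mem_Ioo ⟨by linarith, by linarith⟩
  rw [zc_re]
  have := cosh_pos y.re
  positivity

theorem zc_ne_ofReal {b lam : ℝ} (hb : 0 < b) (hlam : √2 * b < lam) {y : ℂ}
    (hy : |y.im| < π / 4) : zc b y ≠ lam := by
  intro h
  obtain ⟨hlo, hhi⟩ := abs_lt.mp hy
  have hsin : 0 < sin (y.im + π / 4) := sin_pos_of_pos_of_lt_pi (by linarith) (by linarith)
  have hre : y.re = 0 := by
    have him : (zc b y).im = 0 := by rw [h, Complex.ofReal_im]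
    rw [zc_im] at him
    have : sinh y.re = 0 := by
      simpa [hb.ne', hsin.ne'] using him
    exact sinh_eq_zero.mp this
  have hlam_eq : (zc b y).re = lam := by rw [h, Complex.ofReal_re]
  rw [zc_re, hre, cosh_zero, mul_one] at hlam_eq
  have : √2 * b * cos (y.im + π / 4) ≤ √2 * b :=
    mul_le_of_le_one_right (by positivity) (cos_le_one _)
  linarith

theorem differentiable_zc (b : ℝ) : Differentiable ℂ (zc b) := by
  unfold zc
  fun_prop

theorem differentiable_zcDeriv (b : ℝ) : Differentiable ℂ (zcDeriv b) := by
  unfold zcDeriv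
  fun_prop

theorem differentiableAt_gfun {γ β b t lam : ℝ} (hγ : 0 < γ) (hb : 0 < b) (hlam : √2 * b < lam)
    {y : ℂ} (hy : |y.im| < π / 4) : DifferentiableAt ℂ (gfun γ β b t lam) y := by
  have hpow : DifferentiableAt ℂ (fun w => zc b w ^ (β : ℂ)) y :=
    (differentiable_zc b y).cpow_const (Complex.mem_slitPlane_iff.mpr (.inl (zc_re_pos hb hy)))
  have hmlf : DifferentiableAt ℂ (fun w => mlf γ 1 (-(((t ^ γ : ℝ) : ℂ) * zc b w ^ (β : ℂ)))) y :=
    (differentiable_mlf hγ 1 _).comp y (hpow.const_mul _).neg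
  have hinv : DifferentiableAt ℂ (fun w => (zc b w - lam)⁻¹) y :=
    ((differentiable_zc b y).sub_const _).inv (sub_ne_zero.mpr (zc_ne_ofReal hb hlam hy))
  exact (hmlf.mul (differentiable_zcDeriv b y)).mul hinv

theorem stmt4_general (γ β d lam1 b : ℝ) (hγ : γ ∈ Set.Ioo (0 : ℝ) 1)
    (hd' : d < Real.pi / 4) (hb : 0 < b) (hb' : b < lam1 / Real.sqrt 2) :
    ∀ t : ℝ, 0 < t → ∀ lam : ℝ, lam1 ≤ lam →
      DifferentiableOn ℂ (fun y : ℂ => gfun γ β b t lam y) {y : ℂ | |y.im| < d} ∧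
      ContinuousOn (fun y : ℂ => gfun γ β b t lam y) {y : ℂ | |y.im| ≤ d} := by
  intro t _ lam hlam
  have hlam' : √2 * b < lam := by
    rw [lt_div_iff₀ (by positivity)] at hb'
    linarith
  have hdiff : ∀ y : ℂ, |y.im| ≤ d → DifferentiableAt ℂ (gfun γ β b t lam) y :=
    fun y hy => differentiableAt_gfun hγ.1 hb hlam' (hy.trans_lt hd')
  exact ⟨fun y hy => (hdiff y (le_of_lt hy)).differentiableWithinAt,
    fun y hy => (hdiff y hy).continuousAt.continuousWithinAt⟩

/-- `y ↦ g_λ(y,t)` is holomorphic on the open strip `|Im y| < d`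
and continuous on the closed strip `|Im y| ≤ d`. -/
theorem stmt4 (γ β d lam1 b : ℝ) (hγ : γ ∈ Set.Ioo (0 : ℝ) 1)
    (hβ : β ∈ Set.Ioo (0 : ℝ) 1) (hd : 0 < d) (hd' : d < Real.pi / 4)
    (hlam1 : 0 < lam1) (hb : 0 < b) (hb' : b < lam1 / Real.sqrt 2) :
    ∀ t : ℝ, 0 < t → ∀ lam : ℝ, lam1 ≤ lam →
      DifferentiableOn ℂ (fun y : ℂ => gfun γ β b t lam y) {y : ℂ | |y.im| < d} ∧
      ContinuousOn (fun y : ℂ => gfun γ β b t lam y) {y : ℂ | |y.im| ≤ d} :=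
  stmt4_general γ β d lam1 b hγ hd' hb hb'
end

section
/- Let γ, β ∈ (0,1), 0 < d < π/4, λ₁ > 0 and 0 < b < λ₁/√2. Assume there is a constant C₀ > 0 such that |e_{γ,1}(w)| ≤ C₀/(1+|w|) for every w ∈ ℂ with Re w ≤ 0. Then there exists a constant C > 0, depending only on γ, β, d, b, λ₁ and C₀, such that for every t > 0, every real λ ≥ λ₁ and every u ∈ ℝ one has ∫_{−d}^{d} |g_λ(u + i w, t)| dw ≤ C · t^{−γ}. -/
open Real

section Trigonometry

theorem cos_sub_sin_pos {d : ℝ} (hd₀ : 0 ≤ d) (hd : d < π / 4) : 0 < cos d - sin d := by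
  have hsin : sin d < sin (π / 4) :=
    sin_lt_sin_of_lt_of_le_pi_div_two (by linarith [pi_pos]) (by linarith [pi_pos]) hd
  have hcos : cos (π / 4) < cos d := cos_lt_cos_of_nonneg_of_le_pi hd₀ (by linarith [pi_pos]) hd
  rw [sin_pi_div_four] at hsin
  rw [cos_pi_div_four] at hcos
  linarith

variable {d w : ℝ}

theorem cos_le_cos_of_abs_le (hd : d ≤ π) (hw : |w| ≤ d) : cos d ≤ cos w := by
  rw [← cos_abs w]
  exact cos_le_cos_of_nonneg_of_le_pi (abs_nonneg w) hd hw

theorem cos_sub_sin_le_cos_sub_sin (hd : d ≤ π / 2) (hw : |w| ≤ d) :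
    cos d - sin d ≤ cos w - sin w := by
  obtain ⟨hw₁, hw₂⟩ := abs_le.mp hw
  have hcos := cos_le_cos_of_abs_le (by linarith [pi_pos]) hw
  have hsin : sin w ≤ sin d := sin_le_sin_of_le_of_le_pi_div_two (by linarith) hd hw₂
  linarith

theorem cos_sub_sin_le_cos_add_sin (hd : d ≤ π / 2) (hw : |w| ≤ d) :
    cos d - sin d ≤ cos w + sin w := by
  obtain ⟨hw₁, hw₂⟩ := abs_le.mp hw
  have hcos := cos_le_cos_of_abs_le (by linarith [pi_pos]) hw
  have hsin : sin (-d) ≤ sin w :=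
    sin_le_sin_of_le_of_le_pi_div_two (by linarith) (by linarith) hw₁
  rw [sin_neg] at hsin
  linarith

theorem cos_sub_sin_le_sqrt_two (w : ℝ) : cos w - sin w ≤ √2 := by
  refine (le_abs_self _).trans (abs_le_sqrt ?_)
  nlinarith [sin_sq_add_cos_sq w, sq_nonneg (cos w + sin w)]

theorem cosh_sub_one_le_abs_sinh (u : ℝ) : cosh u - 1 ≤ |sinh u| := by
  rw [abs_sinh, ← cosh_abs]
  linarith [cosh_sub_sinh |u|, exp_le_one_iff.mpr (neg_nonpos.mpr (abs_nonneg u))]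

end Trigonometry

section Contour

variable {b c u w : ℝ}

theorem zc_ofReal_add_mul_I (b u w : ℝ) :
    zc b (u + w * Complex.I) =
      ((b * cosh u * (cos w - sin w) : ℝ) : ℂ)
        + ((b * sinh u * (cos w + sin w) : ℝ) : ℂ) * Complex.I := by
  simp [zc, Complex.cosh_add, Complex.sinh_add, Complex.cosh_mul_I, Complex.sinh_mul_I,
    ← Complex.ofReal_cosh, ← Complex.ofReal_sinh, ← Complex.ofReal_cos, ← Complex.ofReal_sin]
  ring_nf
  simp only [Complex.I_sq]
  ring

theorem zcDeriv_ofReal_add_mul_I (b u w : ℝ) :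
    zcDeriv b (u + w * Complex.I) =
      ((b * sinh u * (cos w - sin w) : ℝ) : ℂ)
        + ((b * cosh u * (cos w + sin w) : ℝ) : ℂ) * Complex.I := by
  simp [zcDeriv, Complex.cosh_add, Complex.sinh_add, Complex.cosh_mul_I, Complex.sinh_mul_I,
    ← Complex.ofReal_cosh, ← Complex.ofReal_sinh, ← Complex.ofReal_cos, ← Complex.ofReal_sin]
  ring_nf
  simp only [Complex.I_sq]
  ring

theorem zc_re_s5 (b u w : ℝ) : (zc b (u + w * Complex.I)).re = b * cosh u * (cos w - sin w) := by
  rw [zc_ofReal_add_mul_I]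
  simp only [Complex.add_re, Complex.mul_re, Complex.ofReal_re, Complex.ofReal_im, Complex.I_re,
    Complex.I_im]
  ring

theorem zc_im_s5 (b u w : ℝ) : (zc b (u + w * Complex.I)).im = b * sinh u * (cos w + sin w) := by
  rw [zc_ofReal_add_mul_I]
  simp only [Complex.add_im, Complex.mul_im, Complex.ofReal_re, Complex.ofReal_im, Complex.I_re,
    Complex.I_im]
  ring

theorem mul_cosh_le_zc_re (hb : 0 ≤ b) (hc : c ≤ cos w - sin w) :
    b * c * cosh u ≤ (zc b (u + w * Complex.I)).re := by
  rw [zc_re_s5]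
  nlinarith [mul_nonneg hb (cosh_pos u).le]

theorem zc_re_le (hb : 0 ≤ b) : (zc b (u + w * Complex.I)).re ≤ √2 * b * cosh u := by
  rw [zc_re_s5]
  nlinarith [mul_nonneg hb (cosh_pos u).le, cos_sub_sin_le_sqrt_two w]

theorem mul_abs_sinh_le_abs_zc_im (hb : 0 ≤ b) (hc : c ≤ cos w + sin w) :
    b * c * |sinh u| ≤ |(zc b (u + w * Complex.I)).im| := by
  rw [zc_im_s5, abs_mul, abs_mul, abs_of_nonneg hb]
  nlinarith [mul_nonneg hb (abs_nonneg (sinh u)), le_abs_self (cos w + sin w)]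

theorem norm_zcDeriv_le_s5 (hb : 0 ≤ b) : ‖zcDeriv b (u + w * Complex.I)‖ ≤ √2 * b * cosh u := by
  rw [zcDeriv_ofReal_add_mul_I, Complex.norm_add_mul_I]
  have hsinh : sinh u ^ 2 ≤ cosh u ^ 2 := by nlinarith [cosh_sq u]
  calc √((b * sinh u * (cos w - sin w)) ^ 2 + (b * cosh u * (cos w + sin w)) ^ 2)
      ≤ √(2 * (b * cosh u) ^ 2) := by
        gcongr
        nlinarith [sin_sq_add_cos_sq w, mul_le_mul_of_nonneg_left hsinh
          (mul_nonneg (sq_nonneg b) (sq_nonneg (cos w - sin w)))]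
    _ = √2 * b * cosh u := by
        rw [sqrt_mul zero_le_two, sqrt_sq (mul_nonneg hb (cosh_pos u).le), mul_assoc]

/-- Average the lower bounds `lam - re z` and `|im z|` of `‖z - lam‖` with weights `b * c` and
`lam₁`: these weights make the constant terms cancel, leaving a positive multiple of `cosh u`. -/
theorem mul_cosh_le_norm_zc_sub {lam₁ lam : ℝ} (hb : 0 ≤ b) (hc : 0 ≤ c)
    (hcw : c ≤ cos w + sin w) (hlam₁ : 0 ≤ lam₁) (hlam : lam₁ ≤ lam) :
    b * c * (lam₁ - √2 * b) * cosh u ≤ (lam₁ + b * c) * ‖zc b (u + w * Complex.I) - lam‖ := by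
  set z := zc b (u + w * Complex.I)
  have hre : lam - z.re ≤ ‖z - lam‖ := by
    simpa [norm_sub_rev] using Complex.re_le_norm (lam - z)
  have him : |z.im| ≤ ‖z - lam‖ := by simpa using Complex.abs_im_le_norm (z - lam)
  have hbc : 0 ≤ b * c := mul_nonneg hb hc
  have hsinh : b * c * (cosh u - 1) ≤ |z.im| :=
    (mul_le_mul_of_nonneg_left (cosh_sub_one_le_abs_sinh u) hbc).trans
      (mul_abs_sinh_le_abs_zc_im hb hcw)
  calc b * c * (lam₁ - √2 * b) * cosh u
      = b * c * (lam₁ - √2 * b * cosh u) + lam₁ * (b * c * (cosh u - 1)) := by ring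
    _ ≤ b * c * (lam - z.re) + lam₁ * |z.im| := by
        gcongr
        linarith [zc_re_le (u := u) (w := w) hb]
    _ ≤ (lam₁ + b * c) * ‖z - lam‖ := by nlinarith

end Contour

theorem cpow_ofReal_re_nonneg {z : ℂ} (hz : 0 < z.re) {β : ℝ} (hβ : |β| ≤ 1) :
    0 ≤ (z ^ (β : ℂ)).re := by
  rw [Complex.cpow_ofReal_re]
  have harg : |z.arg| < π / 2 := Complex.abs_arg_lt_pi_div_two_iff.mpr (Or.inl hz)
  have hangle : |z.arg * β| ≤ π / 2 := by
    rw [abs_mul]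
    nlinarith [abs_nonneg z.arg, abs_nonneg β]
  obtain ⟨h₁, h₂⟩ := abs_le.mp hangle
  exact mul_nonneg (by positivity) (cos_nonneg_of_neg_pi_div_two_le_of_le h₁ h₂)

/-- For `|β| ≤ 1`, `z ↦ z ^ β` maps the open right half-plane into the closed one, so
`-(s * z ^ β)` lies where the bound on `f` is available. -/
theorem norm_neg_mul_cpow_le {f : ℂ → ℂ} {C₀ β s : ℝ}
    (hf : ∀ w : ℂ, w.re ≤ 0 → ‖f w‖ ≤ C₀ / (1 + ‖w‖)) (hC₀ : 0 ≤ C₀) (hβ : |β| ≤ 1)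
    (hs : 0 < s) {z : ℂ} (hz : 0 < z.re) :
    ‖f (-((s : ℂ) * z ^ (β : ℂ)))‖ ≤ C₀ / (s * ‖z‖ ^ β) := by
  have hz₀ : 0 < ‖z‖ := hz.trans_le (Complex.re_le_norm z)
  have hre : (-((s : ℂ) * z ^ (β : ℂ))).re ≤ 0 := by
    rw [Complex.neg_re, Complex.re_ofReal_mul, neg_nonpos]
    exact mul_nonneg hs.le (cpow_ofReal_re_nonneg hz hβ)
  have hnorm : ‖-((s : ℂ) * z ^ (β : ℂ))‖ = s * ‖z‖ ^ β := by
    rw [norm_neg, norm_mul, Complex.norm_real, norm_of_nonneg hs.le, Complex.norm_cpow_real]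
  calc ‖f (-((s : ℂ) * z ^ (β : ℂ)))‖ ≤ C₀ / (1 + s * ‖z‖ ^ β) := hnorm ▸ hf _ hre
    _ ≤ C₀ / (s * ‖z‖ ^ β) := by gcongr; linarith

theorem norm_gfun_le {γ β b c t lam₁ lam C₀ u w : ℝ}
    (hml : ∀ w : ℂ, w.re ≤ 0 → ‖mlf γ 1 w‖ ≤ C₀ / (1 + ‖w‖)) (hC₀ : 0 ≤ C₀)
    (hβ₀ : 0 ≤ β) (hβ₁ : β ≤ 1) (hb : 0 < b) (hc : 0 < c)
    (hcw₁ : c ≤ cos w - sin w) (hcw₂ : c ≤ cos w + sin w) (hbl : √2 * b < lam₁)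
    (hlam : lam₁ ≤ lam) (ht : 0 < t) :
    ‖gfun γ β b t lam (u + w * Complex.I)‖
      ≤ C₀ / (b * c) ^ β * (√2 * (lam₁ + b * c) / (c * (lam₁ - √2 * b))) * t ^ (-γ) := by
  set z := zc b (u + w * Complex.I)
  have hbc : 0 < b * c := mul_pos hb hc
  have hgap₀ : 0 < lam₁ - √2 * b := sub_pos.mpr hbl
  have hlam₁ : 0 < lam₁ := lt_of_le_of_lt (by positivity) hbl
  have hre : b * c ≤ z.re :=
    le_mul_of_one_le_right hbc.le (one_le_cosh u) |>.trans (mul_cosh_le_zc_re hb.le hcw₁)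
  have hnorm : b * c ≤ ‖z‖ := hre.trans (Complex.re_le_norm z)
  have hmlf : ‖mlf γ 1 (-(((t ^ γ : ℝ) : ℂ) * z ^ (β : ℂ)))‖ ≤ C₀ / (b * c) ^ β * t ^ (-γ) :=
    calc _ ≤ C₀ / (t ^ γ * ‖z‖ ^ β) :=
          norm_neg_mul_cpow_le hml hC₀ (abs_le.mpr ⟨by linarith, hβ₁⟩) (by positivity)
            (hbc.trans_le hre)
      _ ≤ C₀ / (t ^ γ * (b * c) ^ β) := by gcongr
      _ = C₀ / (b * c) ^ β * t ^ (-γ) := by rw [rpow_neg ht.le]; field_simp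
  have hgap := mul_cosh_le_norm_zc_sub (u := u) hb.le hc.le hcw₂ hlam₁.le hlam
  have hgap_pos : 0 < ‖z - lam‖ :=
    pos_of_mul_pos_right ((by positivity : 0 < b * c * (lam₁ - √2 * b) * cosh u).trans_le hgap)
      (by positivity)
  have hratio : ‖zcDeriv b (u + w * Complex.I)‖ * ‖z - lam‖⁻¹
      ≤ √2 * (lam₁ + b * c) / (c * (lam₁ - √2 * b)) := by
    rw [← div_eq_mul_inv, div_le_iff₀ hgap_pos]
    calc ‖zcDeriv b (u + w * Complex.I)‖ ≤ √2 * b * cosh u := norm_zcDeriv_le_s5 hb.le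
      _ = √2 * (lam₁ + b * c) / (c * (lam₁ - √2 * b))
            * (b * c * (lam₁ - √2 * b) * cosh u / (lam₁ + b * c)) := by
          field_simp
      _ ≤ √2 * (lam₁ + b * c) / (c * (lam₁ - √2 * b)) * ‖z - lam‖ := by
          gcongr
          rw [div_le_iff₀ (by positivity)]
          linarith
  rw [gfun, norm_mul, norm_mul, norm_inv, mul_assoc]
  calc _ ≤ C₀ / (b * c) ^ β * t ^ (-γ) * (√2 * (lam₁ + b * c) / (c * (lam₁ - √2 * b))) :=
        mul_le_mul hmlf hratio (by positivity) (by positivity)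
    _ = _ := by ring

theorem stmt5_general (γ β d lam1 b C₀ : ℝ)
    (hβ : β ∈ Set.Ioo (0 : ℝ) 1) (hd : 0 < d) (hd' : d < Real.pi / 4)
    (hb : 0 < b) (hb' : b < lam1 / Real.sqrt 2) (hC₀ : 0 < C₀)
    (hml : ∀ w : ℂ, w.re ≤ 0 → ‖mlf γ 1 w‖ ≤ C₀ / (1 + ‖w‖)) :
    ∃ C : ℝ, 0 < C ∧ ∀ t : ℝ, 0 < t → ∀ lam : ℝ, lam1 ≤ lam → ∀ u : ℝ,
      (∫ w in (-d)..d, ‖gfun γ β b t lam ((u : ℂ) + (w : ℂ) * Complex.I)‖)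
        ≤ C * t ^ (-γ) := by
  set c := cos d - sin d
  have hc : 0 < c := cos_sub_sin_pos hd.le hd'
  have hbl : √2 * b < lam1 := by rwa [lt_div_iff₀ (by positivity), mul_comm] at hb'
  have hgap : 0 < lam1 - √2 * b := sub_pos.mpr hbl
  set M := C₀ / (b * c) ^ β * (√2 * (lam1 + b * c) / (c * (lam1 - √2 * b)))
  have hM : 0 < M := by
    have : 0 < lam1 := lt_of_le_of_lt (by positivity) hbl
    positivity
  refine ⟨2 * d * M, by positivity, fun t ht lam hlam u => ?_⟩
  have hpoint : ∀ w ∈ Set.uIoc (-d) d,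
      ‖‖gfun γ β b t lam (u + w * Complex.I)‖‖ ≤ M * t ^ (-γ) := by
    intro w hw
    rw [Set.uIoc_of_le (by linarith)] at hw
    have hw' : |w| ≤ d := abs_le.mpr ⟨hw.1.le, hw.2⟩
    have hd₂ : d ≤ π / 2 := by linarith [pi_pos]
    rw [norm_norm]
    exact norm_gfun_le hml hC₀.le hβ.1.le hβ.2.le hb hc (cos_sub_sin_le_cos_sub_sin hd₂ hw')
      (cos_sub_sin_le_cos_add_sin hd₂ hw') hbl hlam ht
  calc _ ≤ ‖∫ w in (-d)..d, ‖gfun γ β b t lam (u + w * Complex.I)‖‖ := le_norm_self _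
    _ ≤ M * t ^ (-γ) * |d - -d| := intervalIntegral.norm_integral_le_of_norm_le_const hpoint
    _ = 2 * d * M * t ^ (-γ) := by rw [abs_of_pos (by linarith)]; ring

/-- `∫_{-d}^{d} |g_λ(u+iw,t)| dw ≤ C t^{-γ}` uniformly in `u ∈ ℝ`. -/
theorem stmt5 (γ β d lam1 b C₀ : ℝ) (hγ : γ ∈ Set.Ioo (0 : ℝ) 1)
    (hβ : β ∈ Set.Ioo (0 : ℝ) 1) (hd : 0 < d) (hd' : d < Real.pi / 4)
    (hlam1 : 0 < lam1) (hb : 0 < b) (hb' : b < lam1 / Real.sqrt 2) (hC₀ : 0 < C₀)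
    (hml : ∀ w : ℂ, w.re ≤ 0 → ‖mlf γ 1 w‖ ≤ C₀ / (1 + ‖w‖)) :
    ∃ C : ℝ, 0 < C ∧ ∀ t : ℝ, 0 < t → ∀ lam : ℝ, lam1 ≤ lam → ∀ u : ℝ,
      (∫ w in (-d)..d, ‖gfun γ β b t lam ((u : ℂ) + (w : ℂ) * Complex.I)‖)
        ≤ C * t ^ (-γ) :=
  stmt5_general γ β d lam1 b C₀ hβ hd hd' hb hb' hC₀ hml
end

section
/- Let γ ∈ (0,1) and assume there is a constant C₀ > 0 such that |e_{γ,γ}(ζ)| ≤ C₀/(1+|ζ|) for every ζ ∈ ℂ with Re ζ ≤ 0. Then there is a constant C > 0, depending only on γ and C₀, such that for every w ∈ ℂ with Re w ≥ 0 and every t > 0, τ > 0, | e_{γ,1}(−t^γ w) − e_{γ,1}(−(t+τ)^γ w) | ≤ C · t^{−1} · τ. -/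
open Real Set MeasureTheory

namespace Real

theorem rpow_mul_exp_neg_le_Gamma_add_one {x y : ℝ} (hx : 0 ≤ x) (hy : 0 ≤ y) :
    y ^ x * exp (-y) ≤ Gamma (x + 1) := by
  have hint : IntegrableOn (fun t => exp (-t) * t ^ x) (Ioi 0) := by
    simpa using GammaIntegral_convergent (s := x + 1) (by linarith)
  calc y ^ x * exp (-y) = ∫ t in Ioi y, y ^ x * exp (-t) := by
        rw [integral_const_mul, integral_exp_neg_Ioi]
    _ ≤ ∫ t in Ioi y, exp (-t) * t ^ x := by
        refine setIntegral_mono_on ((integrableOn_exp_neg_Ioi y).const_mul _)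
          (hint.mono_set (Ioi_subset_Ioi hy)) measurableSet_Ioi fun t ht => ?_
        rw [mul_comm]
        gcongr
        exact le_of_lt ht
    _ ≤ ∫ t in Ioi 0, exp (-t) * t ^ x :=
        setIntegral_mono_set hint
          (ae_restrict_of_forall_mem measurableSet_Ioi fun t ht =>
            mul_nonneg (exp_pos _).le (rpow_nonneg (le_of_lt ht) _))
          (Ioi_subset_Ioi hy).eventuallyLE
    _ = Gamma (x + 1) := by rw [Gamma_eq_integral (by linarith), add_sub_cancel_right]

theorem summable_pow_div_Gamma_mul_add_one {γ : ℝ} (hγ : 0 < γ) {r : ℝ} (hr : 0 ≤ r) :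
    Summable fun k : ℕ => r ^ k / Gamma (k * γ + 1) := by
  -- with `y ^ γ = 2r + 1`, the bound `Γ(kγ + 1) ≥ y ^ (kγ) e⁻ʸ` makes the terms `O(2⁻ᵏ)`
  set y := (2 * r + 1) ^ γ⁻¹
  have hy : 0 ≤ y := by positivity
  have hyγ : y ^ γ = 2 * r + 1 := by
    rw [← rpow_mul (by positivity), inv_mul_cancel₀ hγ.ne', rpow_one]
  refine Summable.of_nonneg_of_le (fun k => by positivity) (fun k => ?_)
    ((summable_geometric_two).mul_left (exp y))
  have hΓ := rpow_mul_exp_neg_le_Gamma_add_one (x := k * γ) (by positivity) hy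
  have hyk : y ^ ((k : ℝ) * γ) = (2 * r + 1) ^ k := by
    rw [mul_comm, rpow_mul hy, hyγ, rpow_natCast]
  rw [hyk] at hΓ
  rw [div_le_iff₀ ((by positivity : (0:ℝ) < _).trans_le hΓ)]
  calc r ^ k ≤ exp y * (1 / 2) ^ k * ((2 * r + 1) ^ k * exp (-y)) := by
        have : exp y * (1 / 2) ^ k * ((2 * r + 1) ^ k * exp (-y)) = (r + 1 / 2) ^ k := by
          rw [exp_neg, show r + 1 / 2 = 1 / 2 * (2 * r + 1) by ring, mul_pow]
          field_simp
        rw [this]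
        exact pow_le_pow_left₀ hr (by linarith) k
    _ ≤ exp y * (1 / 2) ^ k * Gamma (k * γ + 1) := by gcongr

end Real

theorem hasDerivAt_tsum_mul_pow {𝕜 : Type*} [RCLike 𝕜] {c : ℕ → 𝕜}
    (hc : ∀ r : ℝ, 0 ≤ r → Summable fun k => ‖c k‖ * r ^ k) (z : 𝕜) :
    HasDerivAt (fun z => ∑' k, c k * z ^ k) (∑' k, (k + 1) * c (k + 1) * z ^ k) z := by
  set R := ‖z‖ + 1
  have hR : 1 ≤ R := by simp [R]
  have hbound : ∀ (k : ℕ), ∀ y ∈ Metric.ball (0 : 𝕜) R,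
      ‖c k * (k * y ^ (k - 1))‖ ≤ ‖c k‖ * (2 * R) ^ k := by
    intro k y hy
    rw [mem_ball_zero_iff] at hy
    rw [norm_mul, norm_mul, norm_pow, RCLike.norm_natCast, mul_pow]
    have hy' : ‖y‖ ^ (k - 1) ≤ R ^ k :=
      (pow_le_pow_left₀ (norm_nonneg y) hy.le _).trans (pow_le_pow_right₀ hR (Nat.sub_le k 1))
    gcongr
    exact_mod_cast Nat.lt_two_pow_self.le
  have hz : z ∈ Metric.ball (0 : 𝕜) R := by simp [R]
  have hderiv := hasDerivAt_tsum_of_isPreconnected (hc _ (by positivity)) Metric.isOpen_ball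
    (convex_ball _ _).isPreconnected (fun k y _ => (hasDerivAt_pow k y).const_mul (c k)) hbound hz
    ((hc ‖z‖ (norm_nonneg z)).of_norm_bounded fun k => by rw [norm_mul, norm_pow]) hz
  refine hderiv.congr_deriv ?_
  rw [(Summable.of_norm_bounded (hc _ (by positivity)) fun k => hbound k z hz).tsum_eq_zero_add]
  simp only [CharP.cast_eq_zero, zero_mul, mul_zero, zero_add, Nat.cast_add, Nat.cast_one,
    add_tsub_cancel_right]
  exact tsum_congr fun k => by ring

theorem Complex.norm_inv_Gamma_ofReal (x : ℝ) : ‖(Gamma (x : ℂ))⁻¹‖ = |Real.Gamma x|⁻¹ := by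
  rw [Gamma_ofReal, norm_inv, norm_real, Real.norm_eq_abs]

theorem hasDerivAt_mlf_one {γ : ℝ} (hγ : 0 < γ) (z : ℂ) :
    HasDerivAt (mlf γ 1) (mlf γ γ z / γ) z := by
  have hc (r : ℝ) (hr : 0 ≤ r) :
      Summable fun k : ℕ => ‖(Complex.Gamma (((k : ℝ) * γ + 1 : ℝ) : ℂ))⁻¹‖ * r ^ k := by
    refine (summable_pow_div_Gamma_mul_add_one hγ hr).congr fun k => ?_
    rw [Complex.norm_inv_Gamma_ofReal, abs_of_pos (Gamma_pos_of_pos (by positivity)), div_eq_inv_mul]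
  have hcoeff (k : ℕ) : ((k : ℂ) + 1) * (Complex.Gamma ((((k + 1 : ℕ) : ℝ) * γ + 1 : ℝ) : ℂ))⁻¹
      = (γ : ℂ)⁻¹ * (Complex.Gamma (((k : ℝ) * γ + γ : ℝ) : ℂ))⁻¹ := by
    have hkγ : 0 < ((k : ℝ) + 1) * γ := by positivity
    rw [Complex.Gamma_ofReal, Complex.Gamma_ofReal, Nat.cast_succ, Gamma_add_one hkγ.ne',
      show (k : ℝ) * γ + γ = ((k : ℝ) + 1) * γ by ring]
    have := (Gamma_pos_of_pos hkγ).ne'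
    push_cast
    field_simp
  refine (hasDerivAt_tsum_mul_pow hc z).congr_deriv ?_
  simp_rw [hcoeff, mul_assoc, tsum_mul_left]
  rw [div_eq_inv_mul, mlf]

theorem hasDerivAt_mlf_one_neg_rpow_mul {γ : ℝ} (hγ : 0 < γ) (w : ℂ) {s : ℝ} (hs : 0 < s) :
    HasDerivAt (fun s : ℝ => mlf γ 1 (-((s ^ γ : ℝ) : ℂ) * w))
      (-w * ((s ^ (γ - 1) : ℝ) : ℂ) * mlf γ γ (-((s ^ γ : ℝ) : ℂ) * w)) s := by
  have hinner : HasDerivAt (fun s : ℝ => -((s ^ γ : ℝ) : ℂ) * w)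
      (-((γ * s ^ (γ - 1) : ℝ) : ℂ) * w) s :=
    ((hasDerivAt_rpow_const (Or.inl hs.ne')).ofReal_comp.neg).mul_const w
  refine ((hasDerivAt_mlf_one hγ _).comp s hinner).congr_deriv ?_
  have : (γ : ℂ) ≠ 0 := by exact_mod_cast hγ.ne'
  push_cast
  field_simp

theorem norm_deriv_mlf_one_neg_rpow_mul_le {γ C₀ : ℝ} (hC₀ : 0 ≤ C₀)
    (hml : ∀ ζ : ℂ, ζ.re ≤ 0 → ‖mlf γ γ ζ‖ ≤ C₀ / (1 + ‖ζ‖)) {w : ℂ} (hw : 0 ≤ w.re)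
    {s : ℝ} (hs : 0 < s) :
    ‖-w * ((s ^ (γ - 1) : ℝ) : ℂ) * mlf γ γ (-((s ^ γ : ℝ) : ℂ) * w)‖ ≤ C₀ / s := by
  set a := s ^ γ * ‖w‖
  have ha : 0 ≤ a := by positivity
  have hre : (-((s ^ γ : ℝ) : ℂ) * w).re ≤ 0 := by
    rw [← Complex.ofReal_neg, Complex.re_ofReal_mul]
    exact mul_nonpos_of_nonpos_of_nonneg (neg_nonpos.2 (by positivity)) hw
  have hnorm : ‖-((s ^ γ : ℝ) : ℂ) * w‖ = a := by
    rw [norm_mul, norm_neg, Complex.norm_real, norm_of_nonneg (by positivity)]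
  calc ‖-w * ((s ^ (γ - 1) : ℝ) : ℂ) * mlf γ γ (-((s ^ γ : ℝ) : ℂ) * w)‖
      = a / s * ‖mlf γ γ (-((s ^ γ : ℝ) : ℂ) * w)‖ := by
        rw [norm_mul, norm_mul, norm_neg, Complex.norm_real, norm_of_nonneg (by positivity),
          rpow_sub_one hs.ne']
        ring
    _ ≤ a / s * (C₀ / (1 + a)) := by
        gcongr
        exact hnorm ▸ hml _ hre
    _ = C₀ / s * (a / (1 + a)) := by ring
    _ ≤ C₀ / s := by
        refine mul_le_of_le_one_right (by positivity) ?_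
        rw [div_le_one (by positivity)]
        linarith

/-- `|e_{γ,1}(-t^γ w) − e_{γ,1}(-(t+τ)^γ w)| ≤ C t⁻¹ τ`
for all `w` with `Re w ≥ 0` and all `t, τ > 0`. -/
theorem stmt18 (γ C₀ : ℝ) (hγ : γ ∈ Set.Ioo (0 : ℝ) 1) (hC₀ : 0 < C₀)
    (hml : ∀ ζ : ℂ, ζ.re ≤ 0 → ‖mlf γ γ ζ‖ ≤ C₀ / (1 + ‖ζ‖)) :
    ∃ C : ℝ, 0 < C ∧ ∀ w : ℂ, 0 ≤ w.re → ∀ t τ : ℝ, 0 < t → 0 < τ →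
      ‖mlf γ 1 (-((t ^ γ : ℝ) : ℂ) * w)
          - mlf γ 1 (-(((t + τ) ^ γ : ℝ) : ℂ) * w)‖
        ≤ C * t⁻¹ * τ := by
  refine ⟨C₀, hC₀, fun w hw t τ ht _ => ?_⟩
  have hmvt := norm_image_sub_le_of_norm_deriv_le_segment'
    (fun s hs => (hasDerivAt_mlf_one_neg_rpow_mul hγ.1 w (ht.trans_le hs.1)).hasDerivWithinAt)
    (fun s hs => (norm_deriv_mlf_one_neg_rpow_mul_le hC₀.le hml hw (ht.trans_le hs.1)).trans
      (div_le_div_of_nonneg_left hC₀.le ht hs.1))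
    (t + τ) ⟨by linarith, le_rfl⟩
  rw [norm_sub_rev, add_sub_cancel_left] at hmvt
  simpa only [div_eq_mul_inv] using hmvt
end
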